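/- Chaitin's incompleteness theorem (abstract form): Suppose 𝒯 is a computably axiomatized theory and there is a computable procedure that, given n, searches 𝒯-proofs and outputs a string x with the property that whenever 𝒯 proves 'C(x) ≥ n' the claim is true (soundness). Then there is a constant c (depending on 𝒯 and U) such that 𝒯 proves no statement of the form 'C(x) ≥ n' with n ≥ c: otherwise the search procedure on input n ≥ c would output a string x with C(x) ≥ n describable by log n + O(1) bits, contradicting the description bound C(x) ≤ log n + O(1). -/
import Mathlib

lemma two_mul_le_two_pow : ∀ k : ℕ, 1 ≤ k → 2 * k ≤ 2 ^ k := by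
  intro k hk
  induction k with
  | zero => omega
  | succ n ih =>
    rcases Nat.eq_zero_or_pos n with h | h
    · subst h; norm_num
    · have := ih h
      have : 2 ^ n ≥ 1 := Nat.one_le_two_pow
      rw [pow_succ]
      omega

/-- Chaitin's incompleteness theorem, abstract form. Provability in `𝒯` of statements
`"C x ≥ n"` is modelled by a set `Prov` of pairs `(x, n)` that is sound (`(x,n) ∈ Prov`
implies `C x ≥ n`) and searchable: a computable `search` finds, for each `n`, a witness
whenever one exists. Assuming the description bound (computable functions of `n` are
describable in `log₂ n + O(1)` bits), there is a constant `c` such that `𝒯` proves no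
statement `"C x ≥ n"` with `n ≥ c`. -/
theorem stmt18 (U : List Bool → Option (List Bool)) (C : List Bool → ℕ)
    (hC : ∀ x, C x = sInf {k | ∃ p : List Bool, p.length = k ∧ U p = some x})
    (Prov : Set (List Bool × ℕ))
    (sound : ∀ xn ∈ Prov, xn.2 ≤ C xn.1)
    (search : ℕ → Option (List Bool)) (hsearch_comp : Computable search)
    (hsearch : ∀ n : ℕ, (∃ x, (x, n) ∈ Prov) →
      ∃ x, search n = some x ∧ (x, n) ∈ Prov)
    (hdesc : ∀ g : ℕ → List Bool, Computable g →
      ∃ d : ℕ, ∀ n, C (g n) ≤ Nat.log 2 n + d) :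
    ∃ c : ℕ, ∀ (x : List Bool) (n : ℕ), c ≤ n → (x, n) ∉ Prov := by
  set g : ℕ → List Bool := fun n => (search n).getD [] with hg
  have hgcomp : Computable g :=
    Computable.option_getD hsearch_comp (Computable.const [])
  obtain ⟨d, hd⟩ := hdesc g hgcomp
  refine ⟨2 * d + 2, fun x n hn hmem => ?_⟩
  obtain ⟨y, hy, hyP⟩ := hsearch n ⟨x, hmem⟩
  have hgy : g n = y := by simp [hg, hy]
  have h1 : n ≤ C y := sound _ hyP
  have h2 : C y ≤ Nat.log 2 n + d := hgy ▸ hd n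
  -- bound the log
  have hn1 : 1 ≤ Nat.log 2 n := Nat.le_log_of_pow_le (by norm_num) (by omega)
  have h3 : 2 * Nat.log 2 n ≤ 2 ^ Nat.log 2 n := two_mul_le_two_pow _ hn1
  have h4 : 2 ^ Nat.log 2 n ≤ n := Nat.pow_log_le_self 2 (by omega)
  omega
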